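/- Let x ∈ Ω_m^2(−1) (i.e. x is a linear combination of tensors e_1⊠⋯⊠e_m with each e_i ∈ {a,b,c} and exactly one e_i = b). Then for all k ≥ 1 and all 1 ≤ i ≤ k+1, s_i(x^{⋄k}) = 0, where s_i are the degeneracy-type operators deleting the i-th slot. The key step: for any two basis vectors v, w of Ω_m^2(−1), the graded ⋄-commutator [v,w]_⋄ = v⋄w + w⋄v (both have odd degree −1) is annihilated by all s_i; in particular x⋄x = ½[x,x]_⋄ is normalized, and normalization propagates to all powers x^{⋄k}. -/

import Mathlib

/-
STATEMENT 17: Let x ∈ Ω_m²(−1), i.e. a linear combination of tensors e₁⊠⋯⊠e_m of single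
letters (0 = a, 1 = b, 2 = c) with exactly one e_i = b.  Then s_i(x^{⋄k}) = 0 for all
k ≥ 1 and 1 ≤ i ≤ k+1, where the s_i are the (diagonally extended) leaf-deletion
operators.  The key step: for any two such basis vectors v,w, the graded ⋄-commutator
[v,w]_⋄ = v⋄w + w⋄v is annihilated by all s_i.  The product ⋄ on Ω_m = Ω^{⊠m} is the
componentwise concatenation with Koszul signs (determined by the b-counts), and on a
word e₁⋯e_k the operator s_i (deleting the i-th leaf of the corresponding short forest)
either merges the adjacent letters, removes a boundary letter, or gives 0, as follows.
-/

noncomputable section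

abbrev Word := FreeMonoid (Fin 3)
abbrev Tm (m : ℕ) : Type := (Fin m → Word) →₀ ℝ

def bcount (w : Word) : ℕ := (FreeMonoid.toList w).count 1

/-- the effect of the leaf-deletion operator s_i on a single word (`none` means 0):
deleting the i-th leaf of the short forest with k+1 leaves corresponding to a word of
length k.  If the leaf shares its branch with a neighbour (an adjacent letter a) or is
the unique leaf of its tree (both adjacent letters c, or a boundary letter c), the two
adjacent letters are merged (to their maximum) resp. the boundary letter is removed;
otherwise the result is 0. -/
def sList (i : ℕ) (w : List (Fin 3)) : Option (List (Fin 3)) :=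
  if i = 0 ∨ w.length + 1 < i then none
  else if w = [] then some []
  else if i = 1 then (if w.head? = some 1 then none else some w.tail)
  else if i = w.length + 1 then (if w.getLast? = some 1 then none else some w.dropLast)
  else
    let x := w.getD (i - 2) 0
    let y := w.getD (i - 1) 0
    if x = 0 ∨ y = 0 ∨ (x = 2 ∧ y = 2) then
      some (w.take (i - 2) ++ [max x y] ++ w.drop i)
    else none

/-- s_i on Ω_m, extended diagonally: s_i(c₁⊠⋯⊠c_m) = s_i(c₁)⊠⋯⊠s_i(c_m). -/
def sM (m i : ℕ) : Tm m →ₗ[ℝ] Tm m :=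
  Finsupp.lift (Tm m) ℝ (Fin m → Word) fun ws =>
    if ∀ j, (sList i (FreeMonoid.toList (ws j))).isSome then
      Finsupp.single
        (fun j => FreeMonoid.ofList ((sList i (FreeMonoid.toList (ws j))).getD [])) 1
    else 0

/-- Koszul sign exponent for the componentwise product on Ω^{⊠m}. -/
def koz {m : ℕ} (p q : Fin m → Word) : ℕ :=
  ∑ j : Fin m, ∑ j' ∈ Finset.univ.filter (fun j' => j' < j), bcount (p j) * bcount (q j')

/-- the product ⋄ on Ω_m = Ω^{⊠m}: componentwise concatenation with Koszul signs. -/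
def mulM {m : ℕ} (f g : Tm m) : Tm m :=
  f.sum fun p r => g.sum fun q s =>
    Finsupp.single (fun j => p j * q j) (r * s * ((-1 : ℝ) ^ (koz p q)))

/-- ⋄-powers. -/
def powM {m : ℕ} (x : Tm m) : ℕ → Tm m
  | 0 => Finsupp.single (fun _ => 1) 1
  | k + 1 => mulM x (powM x k)

/-- the basis tensor of single letters given by e : Fin m → Fin 3. -/
def bs {m : ℕ} (e : Fin m → Fin 3) : Tm m :=
  Finsupp.single (fun j => FreeMonoid.of (e j)) 1

/-!
The operator `s_i` only looks at the letters in positions `i - 1` and `i` of each word, so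
`s_{l+2}(u ⋄ z) = u ⋄ s_2(z)` when all words of `u` have length `l`, and
`s_2(u ⋄ z) = s_2(u) ⋄ z` when they have length 2; the Koszul signs survive because they only
depend on the numbers of `b`'s, which `s_2` preserves.  Writing `x^k = x^(i-2) ⋄ x^(k-i+2)` thus
reduces the claim to `s_1(x ⋄ _) = 0`, which holds since every tensor of `x` has a factor starting
with `b`, and to `s_2(x ⋄ x) = 0`.  For the latter, `s_2` is symmetric in the two letters it
merges, while the Koszul signs of `v ⋄ w` and `w ⋄ v` are opposite when the `b`'s of `v` and `w`
sit in different factors; when they sit in the same factor, `s_2` meets `bb` and gives 0.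
-/

theorem sList_cons_of_two_le (a : Fin 3) (l : List (Fin 3)) (n : ℕ) :
    sList (n + 3) (a :: l) = (sList (n + 2) l).map (a :: ·) := by
  rcases l with _ | ⟨b, l⟩
  · simp [sList]
  unfold sList
  simp only [List.length_cons, List.getD_cons_succ, show n + 3 - 2 = n + 1 by omega,
    show n + 3 - 1 = (n + 1) + 1 by omega, List.take_succ_cons, List.drop_succ_cons,
    List.getLast?_cons_cons, List.dropLast_cons_of_ne_nil (List.cons_ne_nil b l)]
  split_ifs <;> simp_all
  omega

theorem sList_append_left (u w : List (Fin 3)) :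
    sList (u.length + 2) (u ++ w) = (sList 2 w).map (u ++ ·) := by
  induction u with
  | nil => simp
  | cons a u ih =>
    rw [List.length_cons, List.cons_append, sList_cons_of_two_le, ih, Option.map_map]
    rfl

theorem sList_two_append (w r : List (Fin 3)) (hw : w.length = 2) :
    sList 2 (w ++ r) = (sList 2 w).map (· ++ r) := by
  match w, hw with
  | [c, d], _ =>
    simp only [sList, List.cons_append, List.nil_append]
    simp

theorem sList_two_count (w w' : List (Fin 3)) (h : sList 2 w = some w') :
    w'.count 1 = w.count 1 := by
  match w with
  | [] => simp [sList] at h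
  | [c] => unfold sList at h; split_ifs at h <;> simp_all
  | c :: d :: t =>
    obtain ⟨hcd, rfl⟩ : (c = 0 ∨ d = 0 ∨ c = 2 ∧ d = 2) ∧ max c d :: t = w' := by
      simpa [sList] using h
    have hmax : ∀ c d : Fin 3, (c = 0 ∨ d = 0 ∨ c = 2 ∧ d = 2) →
        (if max c d = 1 then 1 else 0) = (if d = 1 then 1 else 0) + (if c = 1 then 1 else 0) := by
      decide
    simp only [List.count_cons, beq_iff_eq, hmax c d hcd]
    omega

theorem sList_two_pair_comm (x y : Fin 3) : sList 2 [x, y] = sList 2 [y, x] := by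
  revert x y; decide

theorem sList_one_b_cons (t : List (Fin 3)) : sList 1 (1 :: t) = none := by
  simp [sList]

theorem sList_b_pair_of_ne {i : ℕ} (hi2 : i ≠ 2) (hi3 : i ≠ 3) (y : Fin 3) :
    sList i [1, y] = none := by
  unfold sList
  split_ifs <;> simp_all
  omega

theorem sList_three_pair_b (x : Fin 3) : sList 3 [x, 1] = none := by
  revert x; decide

theorem bcount_mul (u v : Word) : bcount (u * v) = bcount u + bcount v := by
  simp [bcount, List.count_append]

theorem bcount_sList_two {w : Word} (h : (sList 2 w.toList).isSome) :
    bcount (FreeMonoid.ofList ((sList 2 w.toList).getD [])) = bcount w := by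
  obtain ⟨w', hw'⟩ := Option.isSome_iff_exists.1 h
  rw [hw', Option.getD_some, bcount, FreeMonoid.toList_ofList, sList_two_count _ _ hw', bcount]

theorem koz_congr {m : ℕ} {p p' q q' : Fin m → Word} (hp : ∀ j, bcount (p j) = bcount (p' j))
    (hq : ∀ j, bcount (q j) = bcount (q' j)) : koz p q = koz p' q' := by
  simp [koz, hp, hq]

theorem koz_mul_left {m : ℕ} (p q t : Fin m → Word) :
    koz (fun j => p j * q j) t = koz p t + koz q t := by
  simp [koz, bcount_mul, add_mul, Finset.sum_add_distrib]

theorem koz_mul_right {m : ℕ} (p q t : Fin m → Word) :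
    koz p (fun j => q j * t j) = koz p q + koz p t := by
  simp [koz, bcount_mul, mul_add, Finset.sum_add_distrib]

theorem koz_one_left {m : ℕ} (p : Fin m → Word) : koz (fun _ => 1) p = 0 := by
  simp [koz, bcount]

theorem koz_one_right {m : ℕ} (p : Fin m → Word) : koz p (fun _ => 1) = 0 := by
  simp [koz, bcount]

theorem mulM_single_single {m : ℕ} (p q : Fin m → Word) (r s : ℝ) :
    mulM (Finsupp.single p r) (Finsupp.single q s)
      = Finsupp.single (fun j => p j * q j) (r * s * (-1) ^ koz p q) := by
  rw [mulM, Finsupp.sum_single_index (by simp), Finsupp.sum_single_index (by simp)]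

theorem mulM_zero_left {m : ℕ} (g : Tm m) : mulM 0 g = 0 := by simp [mulM]

theorem mulM_zero_right {m : ℕ} (f : Tm m) : mulM f 0 = 0 := by simp [mulM]

def mulₗ {m : ℕ} : Tm m →ₗ[ℝ] Tm m →ₗ[ℝ] Tm m :=
  Finsupp.lift _ ℝ _ fun p => Finsupp.lift _ ℝ _ fun q =>
    Finsupp.single (fun j => p j * q j) ((-1) ^ koz p q)

theorem mulₗ_apply {m : ℕ} (f g : Tm m) : mulₗ f g = mulM f g := by
  simp only [mulₗ, mulM, Finsupp.lift_apply, LinearMap.finsupp_sum_apply, LinearMap.smul_apply,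
    Finsupp.smul_sum, Finsupp.smul_single, smul_eq_mul, mul_assoc]

theorem mulM_assoc {m : ℕ} (f g h : Tm m) : mulM (mulM f g) h = mulM f (mulM g h) := by
  simp only [← mulₗ_apply]
  induction f using Finsupp.induction_linear with
  | zero => simp
  | add f f' hf hf' => simp [hf, hf']
  | single p r =>
  induction g using Finsupp.induction_linear with
  | zero => simp
  | add g g' hg hg' => simp [hg, hg']
  | single q s =>
  induction h using Finsupp.induction_linear with
  | zero => simp
  | add h h' hh hh' => simp [hh, hh']
  | single t u =>
  simp only [mulₗ_apply, mulM_single_single, koz_mul_left, koz_mul_right, mul_assoc, pow_add]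
  ring_nf

theorem mulM_one {m : ℕ} (f : Tm m) : mulM f (Finsupp.single (fun _ => 1) 1) = f := by
  rw [← mulₗ_apply]
  induction f using Finsupp.induction_linear with
  | zero => simp
  | add f g hf hg => simp [hf, hg]
  | single p r => simp [mulₗ_apply, mulM_single_single, koz_one_right]

theorem one_mulM {m : ℕ} (f : Tm m) : mulM (Finsupp.single (fun _ => 1) 1) f = f := by
  rw [← mulₗ_apply]
  induction f using Finsupp.induction_linear with
  | zero => simp
  | add f g hf hg => simp [hf, hg]
  | single p r => simp [mulₗ_apply, mulM_single_single, koz_one_left]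

theorem powM_add {m : ℕ} (x : Tm m) (a b : ℕ) :
    powM x (a + b) = mulM (powM x a) (powM x b) := by
  induction a with
  | zero => rw [Nat.zero_add, powM, one_mulM]
  | succ a ih => rw [Nat.add_right_comm, powM, powM, ih, mulM_assoc]

theorem powM_one {m : ℕ} (x : Tm m) : powM x 1 = x := by
  rw [powM, powM, mulM_one]

def homog (m l : ℕ) : Submodule ℝ (Tm m) :=
  Finsupp.supported ℝ ℝ {p | ∀ j, (p j).length = l}

theorem mulM_mem_homog {m l l' : ℕ} {u v : Tm m} (hu : u ∈ homog m l) (hv : v ∈ homog m l') :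
    mulM u v ∈ homog m (l + l') := by
  have : Submodule.map₂ mulₗ (homog m l) (homog m l') ≤ homog m (l + l') := by
    rw [homog, homog, Finsupp.supported_eq_span_single, Finsupp.supported_eq_span_single,
      Submodule.map₂_span_span, Submodule.span_le]
    rintro _ ⟨_, ⟨p, hp, rfl⟩, _, ⟨q, hq, rfl⟩, rfl⟩
    simp only [SetLike.mem_coe, mulₗ_apply, mulM_single_single]
    exact Finsupp.single_mem_supported ℝ _ fun j => by simp [hp j, hq j]
  exact mulₗ_apply u v ▸ this (Submodule.apply_mem_map₂ _ hu hv)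

theorem powM_mem_homog {m : ℕ} {x : Tm m} (hx : x ∈ homog m 1) (k : ℕ) :
    powM x k ∈ homog m k := by
  induction k with
  | zero => exact Finsupp.single_mem_supported ℝ _ fun j => rfl
  | succ k ih => rw [powM, Nat.add_comm]; exact mulM_mem_homog hx ih

theorem sM_single {m : ℕ} (i : ℕ) (p : Fin m → Word) (r : ℝ) :
    sM m i (Finsupp.single p r) = if ∀ j, (sList i (p j).toList).isSome then
      Finsupp.single (fun j => FreeMonoid.ofList ((sList i (p j).toList).getD [])) r else 0 := by
  rw [sM, Finsupp.lift_apply, Finsupp.sum_single_index (by simp)]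
  split_ifs <;> simp

theorem sM_single_eq_zero {m i : ℕ} {p : Fin m → Word} {j : Fin m}
    (hj : sList i (p j).toList = none) (r : ℝ) : sM m i (Finsupp.single p r) = 0 := by
  rw [sM_single, if_neg fun h => by simpa [hj] using h j]

theorem sM_single_congr {m i : ℕ} {p q : Fin m → Word}
    (h : ∀ j, sList i (p j).toList = sList i (q j).toList) (r : ℝ) :
    sM m i (Finsupp.single p r) = sM m i (Finsupp.single q r) := by
  simp only [sM_single, h]

theorem sM_add_two_mulM_single {m l : ℕ} {p : Fin m → Word} (hp : ∀ j, (p j).length = l)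
    (q : Fin m → Word) (r s : ℝ) :
    sM m (l + 2) (mulM (Finsupp.single p r) (Finsupp.single q s))
      = mulM (Finsupp.single p r) (sM m 2 (Finsupp.single q s)) := by
  have hs (j) : sList (l + 2) (p j * q j).toList
      = (sList 2 (q j).toList).map ((p j).toList ++ ·) := by
    rw [FreeMonoid.toList_mul, ← hp j, FreeMonoid.length, sList_append_left]
  rw [mulM_single_single, sM_single, sM_single]
  simp only [hs, Option.isSome_map]
  split_ifs with h
  · rw [mulM_single_single, koz_congr (fun _ => rfl) fun j => bcount_sList_two (h j)]
    congr 2 with j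
    obtain ⟨w, hw⟩ := Option.isSome_iff_exists.1 (h j)
    simp [hw]
  · rw [mulM_zero_right]

theorem sM_two_mulM_single {m : ℕ} {p : Fin m → Word} (hp : ∀ j, (p j).length = 2)
    (q : Fin m → Word) (r s : ℝ) :
    sM m 2 (mulM (Finsupp.single p r) (Finsupp.single q s))
      = mulM (sM m 2 (Finsupp.single p r)) (Finsupp.single q s) := by
  have hs (j) : sList 2 (p j * q j).toList
      = (sList 2 (p j).toList).map (· ++ (q j).toList) := by
    rw [FreeMonoid.toList_mul, sList_two_append _ _ (hp j)]
  rw [mulM_single_single, sM_single, sM_single]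
  simp only [hs, Option.isSome_map]
  split_ifs with h
  · rw [mulM_single_single, koz_congr (fun j => bcount_sList_two (h j)) fun _ => rfl]
    congr 2 with j
    obtain ⟨w, hw⟩ := Option.isSome_iff_exists.1 (h j)
    simp [hw]
  · rw [mulM_zero_left]

theorem sM_add_two_mulM {m l : ℕ} {u : Tm m} (hu : u ∈ homog m l) (z : Tm m) :
    sM m (l + 2) (mulM u z) = mulM u (sM m 2 z) := by
  have : Set.EqOn (mulₗ.compr₂ (sM m (l + 2))) (mulₗ.compl₂ (sM m 2)) (homog m l) := by
    rw [homog, Finsupp.supported_eq_span_single]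
    refine LinearMap.eqOn_span' ?_
    rintro _ ⟨p, hp, rfl⟩
    refine Finsupp.lhom_ext fun q s => ?_
    simpa [mulₗ_apply] using sM_add_two_mulM_single hp q 1 s
  simpa [mulₗ_apply] using LinearMap.congr_fun (this hu) z

theorem sM_two_mulM {m : ℕ} {u : Tm m} (hu : u ∈ homog m 2) (z : Tm m) :
    sM m 2 (mulM u z) = mulM (sM m 2 u) z := by
  have : Set.EqOn (mulₗ.compr₂ (sM m 2)) (mulₗ.comp (sM m 2)) (homog m 2) := by
    rw [homog, Finsupp.supported_eq_span_single]
    refine LinearMap.eqOn_span' ?_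
    rintro _ ⟨p, hp, rfl⟩
    refine Finsupp.lhom_ext fun q s => ?_
    simpa [mulₗ_apply] using sM_two_mulM_single hp q 1 s
  simpa [mulₗ_apply] using LinearMap.congr_fun (this hu) z

theorem mulM_bs_bs {m : ℕ} (e f : Fin m → Fin 3) :
    mulM (bs e) (bs f) = Finsupp.single (fun j => FreeMonoid.of (e j) * FreeMonoid.of (f j))
      ((-1) ^ koz (fun j => FreeMonoid.of (e j)) (fun j => FreeMonoid.of (f j))) := by
  rw [bs, bs, mulM_single_single, one_mul, one_mul]

theorem koz_of_of {m : ℕ} {e f : Fin m → Fin 3} {j₀ j₁ : Fin m}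
    (he : ∀ j, e j = 1 ↔ j = j₀) (hf : ∀ j, f j = 1 ↔ j = j₁) :
    koz (fun j => FreeMonoid.of (e j)) (fun j => FreeMonoid.of (f j))
      = if j₁ < j₀ then 1 else 0 := by
  simp only [koz, bcount, FreeMonoid.toList_of, List.count_singleton, beq_iff_eq, he, hf, mul_ite,
    mul_one, mul_zero, Finset.sum_ite_eq', Finset.mem_filter, Finset.mem_univ, true_and]
  rw [Finset.sum_eq_single j₀ (by simp_all) (by simp)]
  simp

theorem sM_mulM_bs_bs_of_ne_two {m i : ℕ} (hi : i ≠ 2) {e f : Fin m → Fin 3}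
    {j₀ j₁ : Fin m} (he : e j₀ = 1) (hf : f j₁ = 1) : sM m i (mulM (bs e) (bs f)) = 0 := by
  rw [mulM_bs_bs]
  by_cases hi3 : i = 3
  · subst hi3
    exact sM_single_eq_zero (j := j₁) (by simp [hf, sList_three_pair_b]) _
  · exact sM_single_eq_zero (j := j₀) (by simp [he, sList_b_pair_of_ne hi hi3]) _

theorem sM_two_mulM_bs_add_mulM_bs {m : ℕ} {e f : Fin m → Fin 3} {j₀ j₁ : Fin m}
    (he : ∀ j, e j = 1 ↔ j = j₀) (hf : ∀ j, f j = 1 ↔ j = j₁) :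
    sM m 2 (mulM (bs e) (bs f) + mulM (bs f) (bs e)) = 0 := by
  rw [mulM_bs_bs, mulM_bs_bs, map_add,
    sM_single_congr (p := fun j => FreeMonoid.of (f j) * FreeMonoid.of (e j))
      (q := fun j => FreeMonoid.of (e j) * FreeMonoid.of (f j))
      (fun j => sList_two_pair_comm (f j) (e j)), ← map_add, ← Finsupp.single_add]
  by_cases hj : j₀ = j₁
  · subst hj
    exact sM_single_eq_zero (j := j₀) (by simp [(he j₀).2 rfl, (hf j₀).2 rfl]; decide) _
  · rw [koz_of_of he hf, koz_of_of hf he]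
    rcases lt_or_gt_of_ne hj with h | h <;> simp [h, h.not_gt]

theorem sM_mulM_bs_add_mulM_bs {m : ℕ} {e f : Fin m → Fin 3} (he : ∃! j, e j = 1)
    (hf : ∃! j, f j = 1) (i : ℕ) : sM m i (mulM (bs e) (bs f) + mulM (bs f) (bs e)) = 0 := by
  obtain ⟨j₀, he₀, he⟩ := he
  obtain ⟨j₁, hf₁, hf⟩ := hf
  by_cases hi : i = 2
  · subst hi
    exact sM_two_mulM_bs_add_mulM_bs (j₀ := j₀) (j₁ := j₁)
      (fun j => ⟨he j, fun h => h ▸ he₀⟩) (fun j => ⟨hf j, fun h => h ▸ hf₁⟩)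
  · rw [map_add, sM_mulM_bs_bs_of_ne_two hi he₀ hf₁, sM_mulM_bs_bs_of_ne_two hi hf₁ he₀,
      add_zero]

theorem sM_one_mulM_bs {m : ℕ} {e : Fin m → Fin 3} {j₀ : Fin m} (he : e j₀ = 1) (z : Tm m) :
    sM m 1 (mulM (bs e) z) = 0 := by
  have : (sM m 1).comp (mulₗ (bs e)) = 0 := Finsupp.lhom_ext fun q s => by
    simp only [LinearMap.comp_apply, mulₗ_apply, bs, mulM_single_single, LinearMap.zero_apply]
    exact sM_single_eq_zero (j := j₀) (by simp [he, sList_one_b_cons]) _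
  simpa [mulₗ_apply] using LinearMap.congr_fun this z

theorem sM_two_bs {m : ℕ} {e : Fin m → Fin 3} {j₀ : Fin m} (he : e j₀ = 1) :
    sM m 2 (bs e) = 0 :=
  sM_single_eq_zero (j := j₀) (by simp [he]; decide) _

def omegaTwoNegOne (m : ℕ) : Submodule ℝ (Tm m) :=
  Submodule.span ℝ {f : Tm m | ∃ e : Fin m → Fin 3, (∃! j, e j = 1) ∧ f = bs e}

theorem omegaTwoNegOne_le_homog (m : ℕ) : omegaTwoNegOne m ≤ homog m 1 :=
  Submodule.span_le.2 <| by
    rintro _ ⟨e, -, rfl⟩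
    exact Finsupp.single_mem_supported ℝ _ fun j => rfl

theorem sM_one_mulM_of_mem {m : ℕ} {x : Tm m} (hx : x ∈ omegaTwoNegOne m) (z : Tm m) :
    sM m 1 (mulM x z) = 0 := by
  have : omegaTwoNegOne m ≤ LinearMap.ker ((sM m 1).comp (mulₗ.flip z)) :=
    Submodule.span_le.2 <| by
      rintro _ ⟨e, ⟨j₀, he, -⟩, rfl⟩
      simpa [mulₗ_apply] using sM_one_mulM_bs he z
  simpa [mulₗ_apply] using this hx

theorem sM_two_of_mem {m : ℕ} {x : Tm m} (hx : x ∈ omegaTwoNegOne m) : sM m 2 x = 0 := by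
  have : omegaTwoNegOne m ≤ LinearMap.ker (sM m 2) :=
    Submodule.span_le.2 <| by
      rintro _ ⟨e, ⟨j₀, he, -⟩, rfl⟩
      exact sM_two_bs he
  exact this hx

theorem sM_two_mulM_self {m : ℕ} {x : Tm m} (hx : x ∈ omegaTwoNegOne m) :
    sM m 2 (mulM x x) = 0 := by
  let comm : Tm m →ₗ[ℝ] Tm m →ₗ[ℝ] Tm m := (mulₗ + mulₗ.flip).compr₂ (sM m 2)
  have hcomm : Submodule.map₂ comm (omegaTwoNegOne m) (omegaTwoNegOne m) = ⊥ := by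
    rw [omegaTwoNegOne, Submodule.map₂_span_span, Submodule.span_eq_bot]
    rintro _ ⟨_, ⟨e, he, rfl⟩, _, ⟨f, hf, rfl⟩, rfl⟩
    simpa [comm, mulₗ_apply] using sM_mulM_bs_add_mulM_bs he hf 2
  have hxx := hcomm ▸ Submodule.apply_mem_map₂ comm hx hx
  simpa [comm, mulₗ_apply, ← two_smul ℝ] using hxx

theorem sM_two_powM {m : ℕ} {x : Tm m} (hx : x ∈ omegaTwoNegOne m) {n : ℕ} (hn : 1 ≤ n) :
    sM m 2 (powM x n) = 0 := by
  obtain ⟨n, rfl⟩ := Nat.exists_eq_add_of_le' hn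
  cases n with
  | zero => rw [powM_one]; exact sM_two_of_mem hx
  | succ n =>
    have hsq : powM x 2 = mulM x x := by rw [powM, powM_one]
    rw [show n + 1 + 1 = 2 + n by omega, powM_add,
      sM_two_mulM (powM_mem_homog (omegaTwoNegOne_le_homog m hx) 2), hsq, sM_two_mulM_self hx,
      mulM_zero_left]

theorem stmt17_general (m : ℕ)
    (x : Tm m)
    (hx : x ∈ Submodule.span ℝ
      {f : Tm m | ∃ e : Fin m → Fin 3, (∃! j, e j = 1) ∧ f = bs e}) :
    -- key step: graded commutators of basis vectors are normalized,
    (∀ e f : Fin m → Fin 3, (∃! j, e j = 1) → (∃! j, f j = 1) →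
      ∀ i : ℕ, sM m i (mulM (bs e) (bs f) + mulM (bs f) (bs e)) = 0) ∧
    -- main claim: all ⋄-powers of x are normalized:
    (∀ k : ℕ, 1 ≤ k → ∀ i : ℕ, 1 ≤ i → i ≤ k + 1 → sM m i (powM x k) = 0) := by
  refine ⟨fun e f he hf i => sM_mulM_bs_add_mulM_bs he hf i, fun k hk i hi hik => ?_⟩
  obtain rfl | hi := hi.eq_or_lt
  · obtain ⟨k, rfl⟩ := Nat.exists_eq_add_of_le' hk
    exact sM_one_mulM_of_mem hx _
  · obtain ⟨a, rfl⟩ := Nat.exists_eq_add_of_le' hi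
    obtain ⟨b, rfl⟩ : ∃ b, k = a + (b + 1) := ⟨k - a - 1, by omega⟩
    rw [powM_add, sM_add_two_mulM (powM_mem_homog (omegaTwoNegOne_le_homog m hx) a),
      sM_two_powM hx (Nat.le_add_left 1 b), mulM_zero_right]

theorem stmt17 (m : ℕ) (hm : 1 ≤ m)
    (x : Tm m)
    (hx : x ∈ Submodule.span ℝ
      {f : Tm m | ∃ e : Fin m → Fin 3, (∃! j, e j = 1) ∧ f = bs e}) :
    -- key step: graded commutators of basis vectors are normalized,
    (∀ e f : Fin m → Fin 3, (∃! j, e j = 1) → (∃! j, f j = 1) →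
      ∀ i : ℕ, sM m i (mulM (bs e) (bs f) + mulM (bs f) (bs e)) = 0) ∧
    -- main claim: all ⋄-powers of x are normalized:
    (∀ k : ℕ, 1 ≤ k → ∀ i : ℕ, 1 ≤ i → i ≤ k + 1 → sM m i (powM x k) = 0) :=
  stmt17_general m x hx

end
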